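/- arXiv:1801.04985 — 3 statements merged into one kernel-verified Lean document; each statement's English description precedes it below -/
import Mathlib

section
/- Let I ⊆ {1,...,k} be nonempty and a_1,...,a_k, c_1,...,c_k ≥ 0 with a_l ≥ c_l for all l, and suppose (1/|I|)·Σ_{l∈I} (a_l - c_l) > ε·L for some ε, L > 0. Then (1/k)·Σ_{l=1}^k a_l^α ≥ ((1/k)·Σ_{l=1}^k c_l)^α + (|I|/k)·(ε·L)^α. -/
/-- Superadditivity of `rpow` for real exponents `≥ 1` on nonnegative reals. -/
lemma real_rpow_superadd {u v p : ℝ} (hu : 0 ≤ u) (hv : 0 ≤ v) (hp : 1 ≤ p) :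
    u ^ p + v ^ p ≤ (u + v) ^ p := by
  lift u to NNReal using hu
  lift v to NNReal using hv
  have := NNReal.add_rpow_le_rpow_add u v hp
  exact_mod_cast this

/-- Jensen-type estimate with a deviating index set `I`. -/
theorem stmt3 (k : ℕ) (hk : 1 ≤ k) (α ε L : ℝ) (hα : 1 < α) (hε : 0 < ε) (hL : 0 < L)
    (I : Finset ℕ) (hI : I ⊆ Finset.Icc 1 k) (hIne : I.Nonempty)
    (a c : ℕ → ℝ) (hc : ∀ l ∈ Finset.Icc 1 k, 0 ≤ c l)
    (hac : ∀ l ∈ Finset.Icc 1 k, c l ≤ a l)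
    (hdev : ε * L < (1 / (I.card : ℝ)) * ∑ l ∈ I, (a l - c l)) :
    ((1 / (k : ℝ)) * ∑ l ∈ Finset.Icc 1 k, c l) ^ α + ((I.card : ℝ) / k) * (ε * L) ^ α
      ≤ (1 / (k : ℝ)) * ∑ l ∈ Finset.Icc 1 k, a l ^ α := by
  set S := Finset.Icc 1 k with hS
  have hkpos : (0 : ℝ) < k := by exact_mod_cast hk
  have hIcard : 0 < (I.card : ℝ) := by exact_mod_cast Finset.card_pos.mpr hIne
  have hScard : (S.card : ℝ) = k := by
    rw [hS, Nat.card_Icc]; push_cast; ring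
  -- pointwise: c l ^ α + (indicator I) (a l - c l)^α ≤ a l ^ α
  have key : ∀ l ∈ S, c l ^ α + (if l ∈ I then (a l - c l) ^ α else 0) ≤ a l ^ α := by
    intro l hl
    by_cases hlI : l ∈ I
    · simp only [hlI, if_true]
      have h := real_rpow_superadd (hc l hl) (sub_nonneg.mpr (hac l hl)) hα.le
      rwa [add_sub_cancel] at h
    · simp only [hlI, if_false, add_zero]
      exact Real.rpow_le_rpow (hc l hl) (hac l hl) (le_of_lt (lt_of_lt_of_le one_pos hα.le))
  have hsum : ∑ l ∈ S, c l ^ α + ∑ l ∈ I, (a l - c l) ^ α ≤ ∑ l ∈ S, a l ^ α := by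
    calc ∑ l ∈ S, c l ^ α + ∑ l ∈ I, (a l - c l) ^ α
        = ∑ l ∈ S, (c l ^ α + if l ∈ I then (a l - c l) ^ α else 0) := by
          rw [Finset.sum_add_distrib, Finset.sum_ite_mem, Finset.inter_eq_right.mpr hI]
      _ ≤ ∑ l ∈ S, a l ^ α := Finset.sum_le_sum key
  -- Jensen on S for c
  have jensenC : ((1 / (k : ℝ)) * ∑ l ∈ S, c l) ^ α ≤ (1 / (k : ℝ)) * ∑ l ∈ S, c l ^ α := by
    have := Real.rpow_arith_mean_le_arith_mean_rpow S (fun _ => 1 / (k : ℝ)) c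
      (fun _ _ => by positivity)
      (by rw [Finset.sum_const, nsmul_eq_mul, hScard]; exact mul_one_div_cancel hkpos.ne') hc hα.le
    simpa [Finset.mul_sum] using this
  -- Jensen on I for d := a - c, then compare with εL
  have jensenI : (ε * L) ^ α ≤ (1 / (I.card : ℝ)) * ∑ l ∈ I, (a l - c l) ^ α := by
    have hd : ∀ l ∈ I, 0 ≤ a l - c l :=
      fun l hl => sub_nonneg.mpr (hac l (hI hl))
    have j := Real.rpow_arith_mean_le_arith_mean_rpow I (fun _ => 1 / (I.card : ℝ))
      (fun l => a l - c l) (fun _ _ => by positivity)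
      (by rw [Finset.sum_const, nsmul_eq_mul]; exact mul_one_div_cancel hIcard.ne') hd hα.le
    have h1 : (ε * L) ^ α ≤ ((1 / (I.card : ℝ)) * ∑ l ∈ I, (a l - c l)) ^ α :=
      Real.rpow_le_rpow (by positivity) hdev.le (by linarith)
    calc (ε * L) ^ α ≤ ((1 / (I.card : ℝ)) * ∑ l ∈ I, (a l - c l)) ^ α := h1
      _ = (∑ l ∈ I, (1 / (I.card : ℝ)) * (a l - c l)) ^ α := by rw [Finset.mul_sum]
      _ ≤ ∑ l ∈ I, (1 / (I.card : ℝ)) * (a l - c l) ^ α := j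
      _ = (1 / (I.card : ℝ)) * ∑ l ∈ I, (a l - c l) ^ α := by rw [Finset.mul_sum]
  have h2 : ((I.card : ℝ) / k) * (ε * L) ^ α ≤ (1 / (k : ℝ)) * ∑ l ∈ I, (a l - c l) ^ α := by
    have := mul_le_mul_of_nonneg_left jensenI (le_of_lt (div_pos hIcard hkpos))
    calc ((I.card : ℝ) / k) * (ε * L) ^ α
        ≤ ((I.card : ℝ) / k) * ((1 / (I.card : ℝ)) * ∑ l ∈ I, (a l - c l) ^ α) := this
      _ = (1 / (k : ℝ)) * ∑ l ∈ I, (a l - c l) ^ α := by field_simp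
  calc ((1 / (k : ℝ)) * ∑ l ∈ S, c l) ^ α + ((I.card : ℝ) / k) * (ε * L) ^ α
      ≤ (1 / (k : ℝ)) * ∑ l ∈ S, c l ^ α + (1 / (k : ℝ)) * ∑ l ∈ I, (a l - c l) ^ α :=
        add_le_add jensenC h2
    _ = (1 / (k : ℝ)) * (∑ l ∈ S, c l ^ α + ∑ l ∈ I, (a l - c l) ^ α) := by ring
    _ ≤ (1 / (k : ℝ)) * ∑ l ∈ S, a l ^ α :=
        mul_le_mul_of_nonneg_left hsum (by positivity)
end

section
/- Let ℓ : [0,∞) → (0,∞) be continuous, strictly monotone decreasing, with ∫_{ℝ^d} ℓ(|x|) dx = b < ∞. Then for every x in the closed ball of radius r around the origin, ∫_{B_r(0)} ℓ(|y - r·e_1|) dy ≤ ∫_{B_r(0)} ℓ(|y - x|) dy, where e_1 is the first standard unit vector. -/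
open MeasureTheory Metric Set
open scoped RealInnerProductSpace

section Key

variable {d : ℕ}

local notation "E" => EuclideanSpace ℝ (Fin d)

set_option maxHeartbeats 2000000 in
/-- Moving the center of the ball farther from the origin decreases the integral of a
radially decreasing positive function. -/
lemma key_lemma (r : ℝ) (hr : 0 < r) (ℓ : ℝ → ℝ)
    (hpos : ∀ t, 0 ≤ t → 0 < ℓ t) (hcont : ContinuousOn ℓ (Set.Ici 0))
    (hanti : StrictAntiOn ℓ (Set.Ici 0)) (c c' : E) (hcc : ‖c‖ ≤ ‖c'‖) :
    (∫ y in Metric.ball (0 : E) r, ℓ ‖y - c'‖)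
      ≤ ∫ y in Metric.ball (0 : E) r, ℓ ‖y - c‖ := by
  by_cases hce : c' = c
  · rw [hce]
  -- setup
  set u : E := c' - c with hu_def
  have hu : u ≠ 0 := sub_ne_zero.mpr hce
  have hun : ‖u‖ ≠ 0 := norm_ne_zero_iff.mpr hu
  have hun2 : (0:ℝ) < ‖u‖ ^ 2 := by positivity
  set M : ℝ := ‖c'‖ ^ 2 - ‖c‖ ^ 2 with hM_def
  have hM : 0 ≤ M := by
    have : ‖c‖ ^ 2 ≤ ‖c'‖ ^ 2 := by nlinarith [norm_nonneg c, norm_nonneg c']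
    simpa [hM_def] using sub_nonneg.mpr this
  set R : E ≃ₗᵢ[ℝ] E := Submodule.reflection (ℝ ∙ u)ᗮ with hR_def
  have hR : ∀ y : E, R y = y - ((2 * ⟪u, y⟫) / ‖u‖ ^ 2) • u := by
    intro y
    rw [hR_def, Submodule.reflection_orthogonal_apply, Submodule.reflection_singleton_apply]
    simp only [RCLike.ofReal_real_eq_id, id_eq]
    rw [two_smul]
    module
  set v : E := (M / ‖u‖ ^ 2) • u with hv_def
  set σ : E → E := fun y => R y + v with hσ_def
  have hσ : ∀ y : E, σ y = y + ((M - 2 * ⟪u, y⟫) / ‖u‖ ^ 2) • u := by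
    intro y
    rw [hσ_def]; simp only []
    rw [hR, hv_def]
    module
  -- basic algebraic identities
  have hiu : ⟪u, u⟫ = ‖u‖ ^ 2 := real_inner_self_eq_norm_sq u
  have huc : ⟪u, c⟫ = ⟪c', c⟫ - ⟪c, c⟫ := by rw [hu_def, inner_sub_left]
  have hu2exp : ‖u‖ ^ 2 = ⟪c', c'⟫ - 2 * ⟪c', c⟫ + ⟪c, c⟫ := by
    rw [← hiu, hu_def, inner_sub_left, inner_sub_right, inner_sub_right,
      real_inner_comm c c']
    ring
  -- σ maps c to c'
  have hscalar : (M - 2 * ⟪u, c⟫) / ‖u‖ ^ 2 = 1 := by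
    rw [div_eq_one_iff_eq (by positivity)]
    rw [hM_def, huc, hu2exp, ← real_inner_self_eq_norm_sq c, ← real_inner_self_eq_norm_sq c']
    ring
  have hσc : σ c = c' := by
    rw [hσ c, hscalar, one_smul, hu_def]
    abel
  -- σ is an isometry
  have hdist : ∀ a b : E, ‖σ a - σ b‖ = ‖a - b‖ := by
    intro a b
    have : σ a - σ b = R (a - b) := by
      rw [hσ_def]; simp only []
      rw [map_sub]; abel
    rw [this, R.norm_map]
  -- σ is involutive
  have hRu : R u = -u := Submodule.reflection_orthogonalComplement_singleton_eq_neg u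
  have hRv : R v = -v := by rw [hv_def, _root_.map_smul, hRu, smul_neg]
  have hinv : ∀ y : E, σ (σ y) = y := by
    intro y
    show R (R y + v) + v = y
    rw [map_add, hRv]
    have : R (R y) = y := Submodule.reflection_reflection _ y
    rw [this]; abel
  have hσc' : σ c' = c := by rw [← hσc, hinv]
  -- key norm identities
  have hA : ∀ y : E, ‖σ y - c‖ = ‖y - c'‖ := by
    intro y; rw [← hσc']; exact hdist y c'
  have hB : ∀ y : E, ‖σ y - c'‖ = ‖y - c‖ := by
    intro y; rw [← hσc]; exact hdist y c
  have hE : ∀ y : E, ⟪u, σ y⟫ = M - ⟪u, y⟫ := by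
    intro y
    rw [hσ y, inner_add_right, real_inner_smul_right, hiu,
      div_mul_cancel₀ _ (ne_of_gt hun2)]
    ring
  -- reflection moves points on the far side closer to the origin
  have hF : ∀ y : E, M / 2 ≤ ⟪u, y⟫ → ‖σ y‖ ≤ ‖y‖ := by
    intro y hy
    have hsq : ‖σ y‖ ^ 2 ≤ ‖y‖ ^ 2 := by
      rw [hσ y, norm_add_sq_real, real_inner_smul_right, norm_smul, Real.norm_eq_abs, mul_pow,
        sq_abs, real_inner_comm y u]
      have hy' : M / 2 ≤ ⟪y, u⟫ := by rwa [real_inner_comm]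
      have ht_le : (M - 2 * ⟪y, u⟫) / ‖u‖ ^ 2 ≤ 0 :=
        div_nonpos_iff.mpr (Or.inr ⟨by linarith, le_of_lt hun2⟩)
      have hkey : ((M - 2 * ⟪y, u⟫) / ‖u‖ ^ 2) ^ 2 * ‖u‖ ^ 2
          = ((M - 2 * ⟪y, u⟫) / ‖u‖ ^ 2) * (M - 2 * ⟪y, u⟫) := by
        rw [sq]
        rw [mul_assoc, div_mul_cancel₀ _ (ne_of_gt hun2)]
      rw [hkey]
      nlinarith [mul_nonneg (neg_nonneg.2 ht_le) hM]
    have := Real.sqrt_le_sqrt hsq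
    rwa [Real.sqrt_sq (norm_nonneg _), Real.sqrt_sq (norm_nonneg _)] at this
  -- near side points are closer to c than to c'
  have hG : ∀ y : E, ⟪u, y⟫ ≤ M / 2 → ‖y - c‖ ≤ ‖y - c'‖ := by
    intro y hy
    have hy' : ⟪c', y⟫ - ⟪c, y⟫ ≤ M / 2 := by
      rw [hu_def, inner_sub_left] at hy; exact hy
    have hsq : ‖y - c‖ ^ 2 ≤ ‖y - c'‖ ^ 2 := by
      rw [norm_sub_sq_real, norm_sub_sq_real, real_inner_comm c y, real_inner_comm c' y]
      rw [hM_def] at hy'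
      linarith
    have := Real.sqrt_le_sqrt hsq
    rwa [Real.sqrt_sq (norm_nonneg _), Real.sqrt_sq (norm_nonneg _)] at this
  -- measure-theoretic properties of σ
  have hmp : MeasurePreserving σ (volume : Measure E) volume := by
    have h1 := R.measurePreserving
    have h2 := measurePreserving_add_right (volume : Measure E) v
    exact h2.comp h1
  have hcont_σ : Continuous σ := by
    rw [hσ_def]
    exact R.continuous.add continuous_const
  have hemb : MeasurableEmbedding σ :=
    (Homeomorph.measurableEmbedding ⟨⟨σ, σ, hinv, hinv⟩, hcont_σ, hcont_σ⟩ :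
      MeasurableEmbedding σ)
  -- continuity and integrability
  have hcf : ∀ a : E, Continuous fun y : E => ℓ ‖y - a‖ := fun a =>
    hcont.comp_continuous ((continuous_id.sub continuous_const).norm)
      (fun y => Set.mem_Ici.mpr (norm_nonneg _))
  have hIcb : ∀ a : E, IntegrableOn (fun y => ℓ ‖y - a‖) (closedBall (0:E) r) := fun a =>
    ((hcf a).continuousOn).integrableOn_compact (isCompact_closedBall _ _)
  -- the two half-ball pieces
  have hcont_inner : Continuous fun y : E => ⟪u, y⟫ := continuous_const.inner continuous_id
  set Bp : Set E := ball (0:E) r ∩ {y | M / 2 < ⟪u, y⟫} with hBp_def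
  set Bm : Set E := ball (0:E) r ∩ {y | ⟪u, y⟫ ≤ M / 2} with hBm_def
  have hmeasp : MeasurableSet Bp :=
    measurableSet_ball.inter (measurableSet_lt measurable_const hcont_inner.measurable)
  have hmeasm : MeasurableSet Bm :=
    measurableSet_ball.inter (measurableSet_le hcont_inner.measurable measurable_const)
  have hunion : ball (0:E) r = Bp ∪ Bm := by
    ext y
    simp only [hBp_def, hBm_def, Set.mem_union, Set.mem_inter_iff, Set.mem_setOf_eq]
    rcases le_or_gt (⟪u, y⟫) (M / 2) with h | h <;> tauto
  have hdisj : Disjoint Bp Bm := by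
    rw [Set.disjoint_left]
    rintro y ⟨_, hy1⟩ ⟨_, hy2⟩
    simp only [Set.mem_setOf_eq] at hy1 hy2
    exact absurd hy2 (not_le.mpr hy1)
  have hBpsub : Bp ⊆ closedBall (0:E) r :=
    (Set.inter_subset_left).trans ball_subset_closedBall
  have hBmsub : Bm ⊆ closedBall (0:E) r :=
    (Set.inter_subset_left).trans ball_subset_closedBall
  set g : E → ℝ := fun y => ℓ ‖y - c‖ - ℓ ‖y - c'‖ with hg_def
  have hgI : ∀ s : Set E, s ⊆ closedBall (0:E) r → IntegrableOn g s := fun s hs =>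
    (((hIcb c).mono_set hs).sub ((hIcb c').mono_set hs))
  have hg_nonneg : ∀ y ∈ Bm, 0 ≤ g y := by
    rintro y ⟨_, hy⟩
    have h1 : ‖y - c‖ ≤ ‖y - c'‖ := hG y hy
    have h2 : ℓ ‖y - c'‖ ≤ ℓ ‖y - c‖ :=
      hanti.antitoneOn (Set.mem_Ici.mpr (norm_nonneg _)) (Set.mem_Ici.mpr (norm_nonneg _)) h1
    simpa [hg_def] using sub_nonneg.mpr h2
  have himg : σ '' Bp ⊆ Bm := by
    rintro _ ⟨y, ⟨hyB, hyp⟩, rfl⟩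
    constructor
    · rw [mem_ball_zero_iff]
      exact lt_of_le_of_lt (hF y (le_of_lt hyp)) (mem_ball_zero_iff.mp hyB)
    · have hyp' : M / 2 < ⟪u, y⟫ := hyp
      show ⟪u, σ y⟫ ≤ M / 2
      rw [hE y]
      linarith
  -- the reflection identity for the integrand
  have hgσ : ∀ y : E, g (σ y) = - g y := by
    intro y
    simp only [hg_def]
    rw [hA y, hB y]
    ring
  -- integral computations
  have hIp : IntegrableOn g Bp := hgI _ hBpsub
  have hIm : IntegrableOn g Bm := hgI _ hBmsub
  have hsplit : (∫ y in ball (0:E) r, g y) = (∫ y in Bp, g y) + ∫ y in Bm, g y := by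
    rw [hunion]
    exact setIntegral_union hdisj hmeasm hIp hIm
  have hrefl : (∫ y in σ '' Bp, g y) = ∫ y in Bp, g (σ y) :=
    hmp.setIntegral_image_emb hemb g Bp
  have hneg : (∫ y in Bp, g (σ y)) = - ∫ y in Bp, g y := by
    simp_rw [hgσ]
    exact integral_neg g
  have hmono : (∫ y in σ '' Bp, g y) ≤ ∫ y in Bm, g y := by
    apply setIntegral_mono_set hIm
    · exact (ae_restrict_iff' hmeasm).mpr (Filter.Eventually.of_forall hg_nonneg)
    · exact HasSubset.Subset.eventuallyLE himg
  have hI_nonneg : 0 ≤ ∫ y in ball (0:E) r, g y := by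
    rw [hsplit]
    have : (∫ y in Bp, g y) = - ∫ y in σ '' Bp, g y := by rw [hrefl, hneg, neg_neg]
    rw [this]
    linarith [hmono]
  -- conclude
  have hfi : IntegrableOn (fun y => ℓ ‖y - c‖) (ball (0:E) r) :=
    (hIcb c).mono_set ball_subset_closedBall
  have hfi' : IntegrableOn (fun y => ℓ ‖y - c'‖) (ball (0:E) r) :=
    (hIcb c').mono_set ball_subset_closedBall
  have hsub : (∫ y in ball (0:E) r, g y)
      = (∫ y in ball (0:E) r, ℓ ‖y - c‖) - ∫ y in ball (0:E) r, ℓ ‖y - c'‖ :=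
    integral_sub hfi hfi'
  linarith [hI_nonneg, hsub.symm.le, hsub.le]

end Key

open MeasureTheory

/-- the integral of the path-loss over the ball is minimized (among
center points `x` in the closed ball) at the boundary point `r·e_1`. -/
theorem stmt5 (d : ℕ) (hd : 1 ≤ d) (r : ℝ) (hr : 0 < r) (ℓ : ℝ → ℝ)
    (hpos : ∀ t, 0 ≤ t → 0 < ℓ t) (hcont : ContinuousOn ℓ (Set.Ici 0))
    (hanti : StrictAntiOn ℓ (Set.Ici 0))
    (hint : Integrable (fun x : EuclideanSpace ℝ (Fin d) => ℓ ‖x‖))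
    (b : ℝ) (hb : (∫ x : EuclideanSpace ℝ (Fin d), ℓ ‖x‖) = b)
    (x : EuclideanSpace ℝ (Fin d))
    (hx : x ∈ Metric.closedBall (0 : EuclideanSpace ℝ (Fin d)) r) :
    (∫ y in Metric.ball (0 : EuclideanSpace ℝ (Fin d)) r,
        ℓ ‖y - r • (EuclideanSpace.single (⟨0, hd⟩ : Fin d) (1 : ℝ))‖)
      ≤ ∫ y in Metric.ball (0 : EuclideanSpace ℝ (Fin d)) r, ℓ ‖y - x‖ := by
  apply key_lemma r hr ℓ hpos hcont hanti
  rw [norm_smul, EuclideanSpace.norm_single]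
  simp only [norm_one, mul_one, Real.norm_eq_abs, abs_of_pos hr]
  exact mem_closedBall_zero_iff.mp hx
end

section
/- Let W ⊂ ℝ^d be compact containing 0, and let g : W × W → (0,∞) be continuous and bounded away from 0. Suppose there exist x_0', x_1' ∈ W with g(x_0',x_1') + g(x_1',0) ≤ g(x_0',0). Then there exist x_0 ∈ W, k ≥ 2, and x_1,...,x_{k-1} ∈ W with Σ_{l=1}^k g(x_{l-1},x_l) ≤ g(x_0,0) (with x_k = 0). Conversely, if for some x_0 and some k ≥ 2 a k-hop path satisfies Σ_{l=1}^k g(x_{l-1},x_l) ≤ g(x_0,0), then there exist y_0, y_1 ∈ W with g(y_0,y_1) + g(y_1,0) ≤ g(y_0,0). -/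
lemma stmt10_aux (d : ℕ) (W : Set (EuclideanSpace ℝ (Fin d)))
    (g : EuclideanSpace ℝ (Fin d) → EuclideanSpace ℝ (Fin d) → ℝ) :
    ∀ k, 2 ≤ k → ∀ x : ℕ → EuclideanSpace ℝ (Fin d), x k = 0 →
      (∀ l ≤ k - 1, x l ∈ W) →
      ∑ l ∈ Finset.Icc 1 k, g (x (l - 1)) (x l) ≤ g (x 0) 0 →
      ∃ y0 ∈ W, ∃ y1 ∈ W, g y0 y1 + g y1 0 ≤ g y0 0 := by
  intro k hk
  induction k, hk using Nat.le_induction with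
  | base =>
    intro x hxk hxW hsum
    refine ⟨x 0, hxW 0 (by norm_num), x 1, hxW 1 (by norm_num), ?_⟩
    have : ∑ l ∈ Finset.Icc 1 2, g (x (l - 1)) (x l)
        = g (x 0) (x 1) + g (x 1) (x 2) := by
      simp [Finset.sum_Icc_succ_top, show (1:ℕ) ≤ 2 by norm_num]
    rw [this, hxk] at hsum
    exact hsum
  | succ k hk ih =>
    intro x hxk hxW hsum
    by_cases hcase : g (x (k - 1)) (x k) + g (x k) 0 ≤ g (x (k - 1)) 0
    · exact ⟨x (k - 1), hxW (k - 1) (by omega), x k, hxW k (by omega), hcase⟩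
    · push_neg at hcase
      set x' : ℕ → EuclideanSpace ℝ (Fin d) := fun l => if l = k then 0 else x l with hx'
      have hx'0 : x' 0 = x 0 := by simp [hx']; intro h; omega
      have hx'k : x' k = 0 := by simp [hx']
      have hx'W : ∀ l ≤ k - 1, x' l ∈ W := by
        intro l hl
        have hlk : l ≠ k := by omega
        simpa [hx', hlk] using hxW l (by omega)
      have hsum' : ∑ l ∈ Finset.Icc 1 k, g (x' (l - 1)) (x' l) ≤ g (x' 0) 0 := by
        rw [hx'0]
        have h1 : ∑ l ∈ Finset.Icc 1 k, g (x' (l - 1)) (x' l)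
            = ∑ l ∈ Finset.Icc 1 (k-1), g (x' (l - 1)) (x' l) + g (x' (k-1)) (x' k) := by
          have : k = (k-1) + 1 := by omega
          rw [this, Finset.sum_Icc_succ_top (by omega)]
          congr 2 <;> omega
        have h2 : ∑ l ∈ Finset.Icc 1 (k-1), g (x' (l - 1)) (x' l)
            = ∑ l ∈ Finset.Icc 1 (k-1), g (x (l - 1)) (x l) := by
          apply Finset.sum_congr rfl
          intro l hl
          simp only [Finset.mem_Icc] at hl
          have h3 : l - 1 ≠ k := by omega
          have h4 : l ≠ k := by omega
          simp [hx', h3, h4]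
        have h5 : x' (k-1) = x (k-1) := by
          have : k - 1 ≠ k := by omega
          simp [hx', this]
        have h6 : ∑ l ∈ Finset.Icc 1 (k+1), g (x (l - 1)) (x l)
            = ∑ l ∈ Finset.Icc 1 (k-1), g (x (l - 1)) (x l)
              + g (x (k-1)) (x k) + g (x k) 0 := by
          have hk1 : k + 1 = ((k-1) + 1) + 1 := by omega
          rw [hk1, Finset.sum_Icc_succ_top (by omega), Finset.sum_Icc_succ_top (by omega)]
          have e1 : k - 1 + 1 = k := by omega
          rw [e1]
          have e2 : k + 1 - 1 = k := by omega
          rw [e2]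
          rw [hxk]
        rw [h1, h2, hx'k, h5]
        rw [h6] at hsum
        linarith
      exact ih x' hx'k hx'W hsum'

/-- existence of a multihop trajectory at least as good as the
direct hop is equivalent to the existence of such a two-hop trajectory. -/
theorem stmt10 (d : ℕ) (W : Set (EuclideanSpace ℝ (Fin d))) (hW : IsCompact W)
    (h0W : (0 : EuclideanSpace ℝ (Fin d)) ∈ W)
    (g : EuclideanSpace ℝ (Fin d) → EuclideanSpace ℝ (Fin d) → ℝ)
    (hgcont : ContinuousOn (fun p : EuclideanSpace ℝ (Fin d) × EuclideanSpace ℝ (Fin d) =>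
      g p.1 p.2) (W ×ˢ W))
    (c : ℝ) (hc : 0 < c) (hgc : ∀ x ∈ W, ∀ y ∈ W, c ≤ g x y) :
    ((∃ x0' ∈ W, ∃ x1' ∈ W, g x0' x1' + g x1' 0 ≤ g x0' 0) →
      ∃ x0 ∈ W, ∃ k, 2 ≤ k ∧ ∃ x : ℕ → EuclideanSpace ℝ (Fin d), x 0 = x0 ∧ x k = 0 ∧
        (∀ l ≤ k - 1, x l ∈ W) ∧
        ∑ l ∈ Finset.Icc 1 k, g (x (l - 1)) (x l) ≤ g x0 0) ∧
    ((∃ x0 ∈ W, ∃ k, 2 ≤ k ∧ ∃ x : ℕ → EuclideanSpace ℝ (Fin d), x 0 = x0 ∧ x k = 0 ∧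
        (∀ l ≤ k - 1, x l ∈ W) ∧
        ∑ l ∈ Finset.Icc 1 k, g (x (l - 1)) (x l) ≤ g x0 0) →
      ∃ y0 ∈ W, ∃ y1 ∈ W, g y0 y1 + g y1 0 ≤ g y0 0) := by
  constructor
  · rintro ⟨x0', hx0', x1', hx1', h⟩
    refine ⟨x0', hx0', 2, le_refl 2,
      fun n => if n = 0 then x0' else if n = 1 then x1' else 0, by simp, by simp, ?_, ?_⟩
    · intro l hl
      interval_cases l <;> simp [hx0', hx1']
    · have : ∑ l ∈ Finset.Icc 1 2,
          g ((fun n => if n = 0 then x0' else if n = 1 then x1' else 0) (l - 1))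
            ((fun n => if n = 0 then x0' else if n = 1 then x1' else 0) l)
          = g x0' x1' + g x1' 0 := by
        simp [Finset.sum_Icc_succ_top, show (1:ℕ) ≤ 2 by norm_num]
      rw [this]; exact h
  · rintro ⟨x0, hx0, k, hk, x, hx00, hxk, hxW, hsum⟩
    have := stmt10_aux d W g k hk x hxk hxW (by rw [hx00]; exact hsum)
    exact this
end
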